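/- Let A_1, ..., A_m be disjoint subsets of [n] covering [n] (a partition) and let p be a probability measure on {-1,1}^n. Define the magnetization m(p, A) = (1/|A|) sum_{l in A} E_p[sigma_l]. If Q is a kernel built from exchanges of spins at pairs (l,k) within the same block of the partition, with symmetric rates (i.e. the antisymmetry property R_{ik}(sigma,sigma') = -R_{ki}(sigma,sigma') for the net flux term), then for all p, q: m(p∘q, A) = (1/2) m(p, A) + (1/2) m(q, A) for every block A. -/
import Mathlib


open Finset

/-- Spin value of a Boolean: `true ↦ 1`, `false ↦ -1`. -/
noncomputable def spin (b : Bool) : ℝ := if b then 1 else -1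

/-- The single-pair exchange kernel `Q^{ℓ,k}`: with probability `pacc ℓ k σ σ'`
output `(S_ℓ(σ,σ'_k), S_k(σ',σ_ℓ))`, otherwise output `(σ,σ')`. -/
noncomputable def Qpair {n : ℕ} (pacc : Fin n → Fin n → (Fin n → Bool) → (Fin n → Bool) → ℝ)
    (ℓ k : Fin n) (σ σ' τ τ' : Fin n → Bool) : ℝ :=
  pacc ℓ k σ σ' *
      (if τ = Function.update σ ℓ (σ' k) ∧ τ' = Function.update σ' k (σ ℓ) then 1 else 0) +
    (1 - pacc ℓ k σ σ') * (if τ = σ ∧ τ' = σ' then 1 else 0)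

/-- The collision kernel `Q = (1/n) ∑_{ℓ,k} K(ℓ,k) Q^{ℓ,k}`. -/
noncomputable def Qker {n : ℕ} (K : Fin n → Fin n → ℝ)
    (pacc : Fin n → Fin n → (Fin n → Bool) → (Fin n → Bool) → ℝ)
    (σ σ' τ τ' : Fin n → Bool) : ℝ :=
  (1 / n) * ∑ ℓ, ∑ k, K ℓ k * Qpair pacc ℓ k σ σ' τ τ'

/-- The symmetrized collision product `p∘q`. -/
noncomputable def collide {n : ℕ} (K : Fin n → Fin n → ℝ)
    (pacc : Fin n → Fin n → (Fin n → Bool) → (Fin n → Bool) → ℝ)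
    (p q : (Fin n → Bool) → ℝ) (τ : Fin n → Bool) : ℝ :=
  (1 / 2) * ∑ σ, ∑ σ', ∑ τ', (p σ * q σ' + p σ' * q σ) * Qker K pacc σ σ' τ τ'

/-- Magnetization of `p` over a block `A`: `m(p,A) = (1/|A|) ∑_{ℓ ∈ A} E_p[σ_ℓ]`. -/
noncomputable def mag {n : ℕ} (p : (Fin n → Bool) → ℝ) (A : Finset (Fin n)) : ℝ :=
  (A.card : ℝ)⁻¹ * ∑ ℓ ∈ A, ∑ σ, p σ * spin (σ ℓ)

/- ### Auxiliary lemmas -/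

lemma sum4_comm {M : Type*} [AddCommMonoid M] {α β γ δ : Type*}
    [Fintype α] [Fintype β] [Fintype γ] [Fintype δ] (f : α → β → γ → δ → M) :
    ∑ a : α, ∑ b : β, ∑ c : γ, ∑ d : δ, f a b c d
      = ∑ c : γ, ∑ d : δ, ∑ a : α, ∑ b : β, f a b c d :=
  calc ∑ a, ∑ b, ∑ c, ∑ d, f a b c d
      = ∑ a, ∑ c, ∑ b, ∑ d, f a b c d :=
        Finset.sum_congr rfl fun _ _ => Finset.sum_comm
    _ = ∑ c, ∑ a, ∑ b, ∑ d, f a b c d := Finset.sum_comm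
    _ = ∑ c, ∑ a, ∑ d, ∑ b, f a b c d :=
        Finset.sum_congr rfl fun _ _ => Finset.sum_congr rfl fun _ _ => Finset.sum_comm
    _ = ∑ c, ∑ d, ∑ a, ∑ b, f a b c d :=
        Finset.sum_congr rfl fun _ _ => Finset.sum_comm

lemma sum3_comm {M : Type*} [AddCommMonoid M] {α β γ : Type*}
    [Fintype α] [Fintype β] [Fintype γ] (f : α → β → γ → M) :
    ∑ a : α, ∑ b : β, ∑ c : γ, f a b c = ∑ b : β, ∑ c : γ, ∑ a : α, f a b c :=
  calc ∑ a, ∑ b, ∑ c, f a b c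
      = ∑ b, ∑ a, ∑ c, f a b c := Finset.sum_comm
    _ = ∑ b, ∑ c, ∑ a, f a b c := Finset.sum_congr rfl fun _ _ => Finset.sum_comm

lemma sum_spin_Qpair {n : ℕ} (pacc : Fin n → Fin n → (Fin n → Bool) → (Fin n → Bool) → ℝ)
    (ℓ k j : Fin n) (σ σ' : Fin n → Bool) :
    ∑ τ : Fin n → Bool, ∑ τ' : Fin n → Bool, Qpair pacc ℓ k σ σ' τ τ' * spin (τ j)
      = spin (σ j) + (if j = ℓ then pacc ℓ k σ σ' * (spin (σ' k) - spin (σ j)) else 0) := by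
  simp [Qpair, add_mul, Finset.sum_add_distrib, ite_and, Finset.sum_ite_eq',
    Function.update_apply]
  by_cases h : j = ℓ <;> simp [h] <;> ring

lemma sum_spin_Qker {n : ℕ} (hn : 0 < n) (K : Fin n → Fin n → ℝ)
    (hKrow : ∀ ℓ, ∑ k, K ℓ k = 1)
    (pacc : Fin n → Fin n → (Fin n → Bool) → (Fin n → Bool) → ℝ)
    (j : Fin n) (σ σ' : Fin n → Bool) :
    ∑ τ : Fin n → Bool, ∑ τ' : Fin n → Bool, Qker K pacc σ σ' τ τ' * spin (τ j)
      = spin (σ j) +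
        (1 / n) * ∑ k, K j k * (pacc j k σ σ' * (spin (σ' k) - spin (σ j))) := by
  have hne : (n : ℝ) ≠ 0 := Nat.cast_ne_zero.mpr hn.ne'
  have step1 : ∑ τ : Fin n → Bool, ∑ τ' : Fin n → Bool, Qker K pacc σ σ' τ τ' * spin (τ j)
      = (1 / n) * ∑ l, ∑ k, K l k *
          ∑ τ : Fin n → Bool, ∑ τ' : Fin n → Bool, Qpair pacc l k σ σ' τ τ' * spin (τ j) := by
    have pt : ∀ τ τ' : Fin n → Bool, Qker K pacc σ σ' τ τ' * spin (τ j)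
        = (1 / n) * ∑ l, ∑ k, K l k * (Qpair pacc l k σ σ' τ τ' * spin (τ j)) := by
      intro τ τ'
      simp only [Qker, mul_assoc, Finset.sum_mul]
    simp only [pt, ← Finset.mul_sum]
    congr 1
    rw [sum4_comm fun (τ τ' : Fin n → Bool) (l k : Fin n) =>
      K l k * (Qpair pacc l k σ σ' τ τ' * spin (τ j))]
    simp only [Finset.mul_sum]
  rw [step1]
  have step2 : ∀ l, ∑ k, K l k *
      (∑ τ : Fin n → Bool, ∑ τ' : Fin n → Bool, Qpair pacc l k σ σ' τ τ' * spin (τ j))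
      = spin (σ j) +
        ∑ k, K l k * (if j = l then pacc l k σ σ' * (spin (σ' k) - spin (σ j)) else 0) := by
    intro l
    simp only [sum_spin_Qpair, mul_add, Finset.sum_add_distrib]
    rw [← Finset.sum_mul, hKrow, one_mul]
  simp only [step2, Finset.sum_add_distrib, Finset.sum_const, Finset.card_univ,
    Fintype.card_fin, nsmul_eq_mul, mul_ite, mul_zero]
  rw [Finset.sum_comm]
  simp only [Finset.sum_ite_eq, Finset.mem_univ, if_true]
  rw [mul_add, ← mul_assoc]
  rw [one_div, inv_mul_cancel₀ hne, one_mul]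

lemma flux_skew {n : ℕ} {ι : Type*} [DecidableEq ι] (c : Fin n → ι)
    (K : Fin n → Fin n → ℝ)
    (hKsymm : ∀ ℓ k, K ℓ k = K k ℓ)
    (hKblock : ∀ ℓ k, K ℓ k ≠ 0 → c ℓ = c k)
    (pacc : Fin n → Fin n → (Fin n → Bool) → (Fin n → Bool) → ℝ)
    (hpsymm : ∀ ℓ k σ σ', pacc ℓ k σ σ' = pacc k ℓ σ' σ)
    (a : ι) (σ σ' : Fin n → Bool) :
    (∑ ℓ ∈ Finset.univ.filter (fun ℓ => c ℓ = a), ∑ k,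
        K ℓ k * (pacc ℓ k σ σ' * (spin (σ' k) - spin (σ ℓ))))
      + (∑ ℓ ∈ Finset.univ.filter (fun ℓ => c ℓ = a), ∑ k,
        K ℓ k * (pacc ℓ k σ' σ * (spin (σ k) - spin (σ' ℓ)))) = 0 := by
  have hsecond : (∑ ℓ ∈ Finset.univ.filter (fun ℓ => c ℓ = a), ∑ k,
        K ℓ k * (pacc ℓ k σ' σ * (spin (σ k) - spin (σ' ℓ))))
      = ∑ ℓ : Fin n, ∑ k : Fin n,
          (if c k = a then K k ℓ * (pacc k ℓ σ' σ * (spin (σ ℓ) - spin (σ' k))) else 0) := by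
    rw [Finset.sum_filter]
    rw [show (∑ ℓ : Fin n, if c ℓ = a then
          ∑ k, K ℓ k * (pacc ℓ k σ' σ * (spin (σ k) - spin (σ' ℓ))) else 0)
        = ∑ ℓ : Fin n, ∑ k : Fin n,
          (if c ℓ = a then K ℓ k * (pacc ℓ k σ' σ * (spin (σ k) - spin (σ' ℓ))) else 0) from
      Finset.sum_congr rfl fun ℓ _ => by split <;> simp]
    exact Finset.sum_comm
  rw [hsecond, Finset.sum_filter]
  rw [show (∑ ℓ : Fin n, if c ℓ = a then
        ∑ k, K ℓ k * (pacc ℓ k σ σ' * (spin (σ' k) - spin (σ ℓ))) else 0)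
      = ∑ ℓ : Fin n, ∑ k : Fin n,
        (if c ℓ = a then K ℓ k * (pacc ℓ k σ σ' * (spin (σ' k) - spin (σ ℓ))) else 0) from
    Finset.sum_congr rfl fun ℓ _ => by split <;> simp]
  rw [← Finset.sum_add_distrib]
  refine Finset.sum_eq_zero fun ℓ _ => ?_
  rw [← Finset.sum_add_distrib]
  refine Finset.sum_eq_zero fun k _ => ?_
  by_cases hK : K ℓ k = 0
  · have hK' : K k ℓ = 0 := (hKsymm k ℓ).trans hK
    simp [hK, hK']
  · have hc : c ℓ = c k := hKblock ℓ k hK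
    rw [hc, hKsymm k ℓ, ← hpsymm]
    split
    · ring
    · ring

lemma double_sum_w_spin {n : ℕ} (p q : (Fin n → Bool) → ℝ)
    (hp1 : ∑ σ, p σ = 1) (hq1 : ∑ σ, q σ = 1) (j : Fin n) :
    (∑ σ : Fin n → Bool, ∑ σ' : Fin n → Bool, (p σ * q σ' + p σ' * q σ) * spin (σ j))
      = (∑ σ, p σ * spin (σ j)) + ∑ σ, q σ * spin (σ j) := by
  have pt : ∀ σ : Fin n → Bool,
      ∑ σ' : Fin n → Bool, (p σ * q σ' + p σ' * q σ) * spin (σ j)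
        = p σ * spin (σ j) * (∑ σ' : Fin n → Bool, q σ')
          + q σ * spin (σ j) * (∑ σ' : Fin n → Bool, p σ') := by
    intro σ
    rw [Finset.mul_sum, Finset.mul_sum, ← Finset.sum_add_distrib]
    exact Finset.sum_congr rfl fun σ' _ => by ring
  simp only [pt, hp1, hq1, mul_one, Finset.sum_add_distrib]

/-- Conservation of block magnetization: if `K` is a symmetric stochastic matrix
supported within the blocks of a partition of `[n]` (encoded by a coloring `c`),
and the acceptance probabilities satisfy `pacc(ℓ,k|σ,σ') = pacc(k,ℓ|σ',σ)`, then
`m(p∘q, A) = (1/2) m(p,A) + (1/2) m(q,A)` for every block `A`. -/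
theorem block_magnetization_conserved {n : ℕ} (hn : 0 < n)
    {ι : Type*} [DecidableEq ι] (c : Fin n → ι)
    (K : Fin n → Fin n → ℝ)
    (hKsymm : ∀ ℓ k, K ℓ k = K k ℓ)
    (hK0 : ∀ ℓ k, 0 ≤ K ℓ k)
    (hKrow : ∀ ℓ, ∑ k, K ℓ k = 1)
    (hKblock : ∀ ℓ k, K ℓ k ≠ 0 → c ℓ = c k)
    (pacc : Fin n → Fin n → (Fin n → Bool) → (Fin n → Bool) → ℝ)
    (hpacc0 : ∀ ℓ k σ σ', 0 ≤ pacc ℓ k σ σ')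
    (hpacc1 : ∀ ℓ k σ σ', pacc ℓ k σ σ' ≤ 1)
    (hpsymm : ∀ ℓ k σ σ', pacc ℓ k σ σ' = pacc k ℓ σ' σ)
    (p q : (Fin n → Bool) → ℝ)
    (hp0 : ∀ σ, 0 ≤ p σ) (hp1 : ∑ σ, p σ = 1)
    (hq0 : ∀ σ, 0 ≤ q σ) (hq1 : ∑ σ, q σ = 1)
    (a : ι) :
    mag (collide K pacc p q) (Finset.univ.filter (fun ℓ => c ℓ = a)) =
      (1 / 2) * mag p (Finset.univ.filter (fun ℓ => c ℓ = a)) +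
        (1 / 2) * mag q (Finset.univ.filter (fun ℓ => c ℓ = a)) := by
  classical
  set A : Finset (Fin n) := Finset.univ.filter (fun ℓ => c ℓ = a) with hA
  -- Step 1: magnetization of the collision product at a site j
  have inner : ∀ j : Fin n, ∑ τ : Fin n → Bool, collide K pacc p q τ * spin (τ j)
      = (1 / 2) * ∑ σ : Fin n → Bool, ∑ σ' : Fin n → Bool,
          (p σ * q σ' + p σ' * q σ) *
            (spin (σ j) + (1 / n) *
              ∑ k, K j k * (pacc j k σ σ' * (spin (σ' k) - spin (σ j)))) := by
    intro j
    have pt : ∀ τ : Fin n → Bool, collide K pacc p q τ * spin (τ j)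
        = (1 / 2) * ∑ σ : Fin n → Bool, ∑ σ' : Fin n → Bool, (p σ * q σ' + p σ' * q σ) *
            ∑ τ' : Fin n → Bool, Qker K pacc σ σ' τ τ' * spin (τ j) := by
      intro τ
      simp only [collide, Finset.sum_mul, mul_assoc, ← Finset.mul_sum]
    calc ∑ τ : Fin n → Bool, collide K pacc p q τ * spin (τ j)
        = (1 / 2) * ∑ τ : Fin n → Bool, ∑ σ : Fin n → Bool, ∑ σ' : Fin n → Bool,
            (p σ * q σ' + p σ' * q σ) *
              ∑ τ' : Fin n → Bool, Qker K pacc σ σ' τ τ' * spin (τ j) := by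
          simp only [pt, ← Finset.mul_sum]
      _ = (1 / 2) * ∑ σ : Fin n → Bool, ∑ σ' : Fin n → Bool, ∑ τ : Fin n → Bool,
            (p σ * q σ' + p σ' * q σ) *
              ∑ τ' : Fin n → Bool, Qker K pacc σ σ' τ τ' * spin (τ j) := by
          rw [sum3_comm fun (τ σ σ' : Fin n → Bool) =>
            (p σ * q σ' + p σ' * q σ) * ∑ τ' : Fin n → Bool, Qker K pacc σ σ' τ τ' * spin (τ j)]
      _ = (1 / 2) * ∑ σ : Fin n → Bool, ∑ σ' : Fin n → Bool, (p σ * q σ' + p σ' * q σ) *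
            ∑ τ : Fin n → Bool, ∑ τ' : Fin n → Bool, Qker K pacc σ σ' τ τ' * spin (τ j) := by
          simp only [← Finset.mul_sum]
      _ = _ := by
          simp only [sum_spin_Qker hn K hKrow pacc j]
  -- Step 2: the key summed identity over the block A
  have key : ∑ ℓ ∈ A, ∑ τ : Fin n → Bool, collide K pacc p q τ * spin (τ ℓ)
      = (1 / 2) * (∑ ℓ ∈ A, ∑ σ, p σ * spin (σ ℓ))
        + (1 / 2) * (∑ ℓ ∈ A, ∑ σ, q σ * spin (σ ℓ)) := by
    have expand : ∀ (j : Fin n) (σ σ' : Fin n → Bool),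
        (p σ * q σ' + p σ' * q σ) *
            (spin (σ j) + (1 / n) *
              ∑ k, K j k * (pacc j k σ σ' * (spin (σ' k) - spin (σ j))))
          = (p σ * q σ' + p σ' * q σ) * spin (σ j)
            + (1 / n) * ((p σ * q σ' + p σ' * q σ) *
                ∑ k, K j k * (pacc j k σ σ' * (spin (σ' k) - spin (σ j)))) := by
      intro j σ σ'
      ring
    -- the flux part sums to zero over the block
    have flux0 : ∑ ℓ ∈ A, ∑ σ : Fin n → Bool, ∑ σ' : Fin n → Bool,
        (p σ * q σ' + p σ' * q σ) *
          ∑ k, K ℓ k * (pacc ℓ k σ σ' * (spin (σ' k) - spin (σ ℓ))) = 0 := by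
      have swapA : ∑ ℓ ∈ A, ∑ σ : Fin n → Bool, ∑ σ' : Fin n → Bool,
          (p σ * q σ' + p σ' * q σ) *
            ∑ k, K ℓ k * (pacc ℓ k σ σ' * (spin (σ' k) - spin (σ ℓ)))
          = ∑ σ : Fin n → Bool, ∑ σ' : Fin n → Bool,
              (p σ * q σ' + p σ' * q σ) *
                ∑ ℓ ∈ A, ∑ k, K ℓ k * (pacc ℓ k σ σ' * (spin (σ' k) - spin (σ ℓ))) := by
        rw [Finset.sum_comm]
        refine Finset.sum_congr rfl fun σ _ => ?_
        rw [Finset.sum_comm]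
        exact Finset.sum_congr rfl fun σ' _ => (Finset.mul_sum _ _ _).symm
      rw [swapA]
      set D : (Fin n → Bool) → (Fin n → Bool) → ℝ := fun σ σ' =>
        ∑ ℓ ∈ A, ∑ k, K ℓ k * (pacc ℓ k σ σ' * (spin (σ' k) - spin (σ ℓ))) with hD
      have hskew : ∀ σ σ', D σ' σ = -D σ σ' := by
        intro σ σ'
        have := flux_skew c K hKsymm hKblock pacc hpsymm a σ σ'
        rw [hA] at hD
        simp only [hD]
        rw [← hA] at this ⊢
        linarith [this]
      have hT : (∑ σ : Fin n → Bool, ∑ σ' : Fin n → Bool,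
            (p σ * q σ' + p σ' * q σ) * D σ σ')
          = -∑ σ : Fin n → Bool, ∑ σ' : Fin n → Bool,
            (p σ * q σ' + p σ' * q σ) * D σ σ' := by
        calc (∑ σ : Fin n → Bool, ∑ σ' : Fin n → Bool,
              (p σ * q σ' + p σ' * q σ) * D σ σ')
            = ∑ σ : Fin n → Bool, ∑ σ' : Fin n → Bool,
              (p σ' * q σ + p σ * q σ') * D σ' σ := Finset.sum_comm
          _ = ∑ σ : Fin n → Bool, ∑ σ' : Fin n → Bool,
              -((p σ * q σ' + p σ' * q σ) * D σ σ') := by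
              refine Finset.sum_congr rfl fun σ _ => Finset.sum_congr rfl fun σ' _ => ?_
              rw [hskew σ σ']
              ring
          _ = -∑ σ : Fin n → Bool, ∑ σ' : Fin n → Bool,
              (p σ * q σ' + p σ' * q σ) * D σ σ' := by
              simp [Finset.sum_neg_distrib]
      linarith [hT]
    simp only [inner, expand, Finset.sum_add_distrib, ← Finset.mul_sum, mul_add]
    rw [flux0, mul_zero, mul_zero, add_zero]
    have : ∀ ℓ ∈ A, (∑ σ : Fin n → Bool, ∑ σ' : Fin n → Bool,
        (p σ * q σ' + p σ' * q σ) * spin (σ ℓ))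
        = (∑ σ, p σ * spin (σ ℓ)) + ∑ σ, q σ * spin (σ ℓ) :=
      fun ℓ _ => double_sum_w_spin p q hp1 hq1 ℓ
    rw [Finset.sum_congr rfl this, Finset.sum_add_distrib]
    ring
  simp only [mag, ← hA]
  rw [key]
  ring
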